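/- For positive semidefinite ρ, σ, the equality sgn(σ^{1/2} ρ^{1/2}) = (ρ^{1/2} σ^{1/2})^{-1} ρ^{1/2} (ρ^{-1} # σ) ρ^{1/2} holds, where inverses are Moore–Penrose pseudoinverses and # is the matrix geometric mean. -/

import Mathlib

open Matrix Kronecker
open scoped ComplexOrder

noncomputable section
attribute [local instance] Classical.propDecidable

/-- Moore–Penrose pseudoinverse of a square complex matrix. -/
def pinv {n : Type*} [Fintype n] [DecidableEq n] (A : Matrix n n ℂ) : Matrix n n ℂ :=
  if h : ∃ B : Matrix n n ℂ,
      A * B * A = A ∧ B * A * B = B ∧ (A * B)ᴴ = A * B ∧ (B * A)ᴴ = B * A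
  then h.choose else 0

/-- Positive semidefinite square root (junk value `0` if the matrix is not PSD). -/
def msqrt {n : Type*} [Fintype n] [DecidableEq n] (A : Matrix n n ℂ) : Matrix n n ℂ :=
  if h : A.PosSemidef then
    h.1.eigenvectorUnitary.1 * diagonal ((↑) ∘ (√·) ∘ h.1.eigenvalues) *
      (star h.1.eigenvectorUnitary : Matrix n n ℂ)
  else 0

/-- `sgn(X) = U sgn(Σ) V*` for an SVD `X = U Σ V*`; equivalently `X (X* X)^{-1/2}`
with the Moore–Penrose pseudoinverse. -/
def msgn {n : Type*} [Fintype n] [DecidableEq n] (X : Matrix n n ℂ) : Matrix n n ℂ :=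
  X * pinv (msqrt (Xᴴ * X))

/-- Matrix geometric mean `A # B = A^{1/2} (A^{-1/2} B A^{-1/2})^{1/2} A^{1/2}`
(with Moore–Penrose pseudoinverses). -/
def geo {n : Type*} [Fintype n] [DecidableEq n] (A B : Matrix n n ℂ) : Matrix n n ℂ :=
  msqrt A * msqrt (pinv (msqrt A) * B * pinv (msqrt A)) * msqrt A

/-- The unnormalized maximally entangled state `|Ω⟩ = ∑ i, |i⟩ ⊗ |i⟩`. -/
def omegaVec (d : ℕ) : Fin d × Fin d → ℂ := fun p => if p.1 = p.2 then 1 else 0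

/-- Reduced density matrix of `|C⟩⟨C|` on the first subsystem
(partial trace over the second subsystem). -/
def reducedA {d : ℕ} (C : Fin d × Fin d → ℂ) : Matrix (Fin d) (Fin d) ℂ :=
  Matrix.of fun i j => ∑ k, C (i, k) * star (C (j, k))

/-- Partial trace over the first subsystem of the operator `|D⟩⟨C|`. -/
def trA {d : ℕ} (D C : Fin d × Fin d → ℂ) : Matrix (Fin d) (Fin d) ℂ :=
  Matrix.of fun j l => ∑ i, D (i, j) * star (C (i, l))

/-- `ℓ²→ℓ²` operator norm (largest singular value). -/
def opNorm {n : Type*} [Fintype n] [DecidableEq n] (A : Matrix n n ℂ) : ℝ :=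
  ‖(Matrix.toEuclideanCLM (𝕜 := ℂ) A : EuclideanSpace ℂ n →L[ℂ] EuclideanSpace ℂ n)‖

/-- `P` is the orthogonal projection onto the image (column space) of `A`. -/
def IsOrthProjOnto {n : Type*} [Fintype n] [DecidableEq n] (P A : Matrix n n ℂ) : Prop :=
  Pᴴ = P ∧ P * P = P ∧ LinearMap.range P.mulVecLin = LinearMap.range A.mulVecLin

/-- `η` is the smallest nonzero eigenvalue of the Hermitian matrix `M`. -/
def IsSmallestNonzeroEigenvalue {n : Type*} [Fintype n] [DecidableEq n]
    (M : Matrix n n ℂ) (η : ℝ) : Prop :=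
  ∃ hM : M.IsHermitian, η ≠ 0 ∧ (∃ i, hM.eigenvalues i = η) ∧
    ∀ i, hM.eigenvalues i ≠ 0 → η ≤ hM.eigenvalues i

/-!
Write `A = ρ^{1/2}`, `B = σ^{1/2}` and `S = (A σ A)^{1/2} = ((BA)* BA)^{1/2}`, so that
`sgn(BA) = BA S⁺`. On the other side `ρ⁺ # σ = A⁺ S A⁺` and `(AB)⁺ = ((BA)*)⁺ = BA (S²)⁺ = BA (S⁺)²`.
Since `S² = A σ A`, the range of `S` lies in that of `A`, so the projection `A A⁺ = A⁺ A` fixes `S`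
on both sides and the right-hand side collapses to `BA (S⁺)² S = BA S⁺`.
-/

open scoped MatrixOrder

section MoorePenrose

variable {n : Type*} [Fintype n]

def IsMoorePenroseInverse (A B : Matrix n n ℂ) : Prop :=
  A * B * A = A ∧ B * A * B = B ∧ (A * B)ᴴ = A * B ∧ (B * A)ᴴ = B * A

namespace IsMoorePenroseInverse

variable {A B C : Matrix n n ℂ}

theorem symm (h : IsMoorePenroseInverse A B) : IsMoorePenroseInverse B A :=
  ⟨h.2.1, h.1, h.2.2.2, h.2.2.1⟩

theorem conjTranspose (h : IsMoorePenroseInverse A B) : IsMoorePenroseInverse Aᴴ Bᴴ := by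
  obtain ⟨h₁, h₂, h₃, h₄⟩ := h
  refine ⟨?_, ?_, ?_, ?_⟩
  · rw [← conjTranspose_mul, ← conjTranspose_mul, ← mul_assoc, h₁]
  · rw [← conjTranspose_mul, ← conjTranspose_mul, ← mul_assoc, h₂]
  · rw [← conjTranspose_mul, conjTranspose_conjTranspose, h₄]
  · rw [← conjTranspose_mul, conjTranspose_conjTranspose, h₃]

theorem unique (hB : IsMoorePenroseInverse A B) (hC : IsMoorePenroseInverse A C) : B = C := by
  obtain ⟨b₁, b₂, b₃, b₄⟩ := hB
  obtain ⟨c₁, c₂, c₃, c₄⟩ := hC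
  have hAB : A * B = A * C :=
    calc A * B = A * C * A * B := by rw [c₁]
    _ = (A * C)ᴴ * (A * B)ᴴ := by rw [c₃, b₃]; simp only [mul_assoc]
    _ = (A * B * A * C)ᴴ := by simp only [conjTranspose_mul, mul_assoc]
    _ = A * C := by rw [b₁, c₃]
  have hBA : B * A = C * A :=
    calc B * A = B * (A * C * A) := by rw [c₁]
    _ = (B * A)ᴴ * (C * A)ᴴ := by rw [b₄, c₄]; simp only [mul_assoc]
    _ = (C * (A * B * A))ᴴ := by simp only [conjTranspose_mul, mul_assoc]
    _ = C * A := by rw [b₁, c₄]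
  calc B = B * (A * B) := by rw [← mul_assoc, b₂]
  _ = C * A * C := by rw [hAB, ← mul_assoc, hBA]
  _ = C := c₂

theorem pinv_eq [DecidableEq n] (h : IsMoorePenroseInverse A B) : pinv A = B := by
  have hex : ∃ B : Matrix n n ℂ,
      A * B * A = A ∧ B * A * B = B ∧ (A * B)ᴴ = A * B ∧ (B * A)ᴴ = B * A := ⟨B, h⟩
  rw [pinv, dif_pos hex]
  exact unique hex.choose_spec h

theorem mul_mul_eq_of_mul_conjTranspose_eq (h : IsMoorePenroseInverse A B) {T : Matrix n n ℂ}
    (C : Matrix n n ℂ) (hT : T * Tᴴ = A * C * Aᴴ) : A * B * T = T := by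
  have hker : (1 - A * B) * A = 0 := by rw [sub_mul, one_mul, h.1, sub_self]
  have : ((1 - A * B) * T) * ((1 - A * B) * T)ᴴ = 0 :=
    calc ((1 - A * B) * T) * ((1 - A * B) * T)ᴴ
        = (1 - A * B) * (T * Tᴴ) * (1 - A * B)ᴴ := by simp only [conjTranspose_mul, mul_assoc]
    _ = (1 - A * B) * A * (C * Aᴴ * (1 - A * B)ᴴ) := by rw [hT]; simp only [mul_assoc]
    _ = 0 := by rw [hker, zero_mul]
  rw [sub_mul, one_mul] at this
  exact (sub_eq_zero.mp (self_mul_conjTranspose_eq_zero.mp this)).symm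

theorem mul_mul_eq_of_conjTranspose_mul_eq (h : IsMoorePenroseInverse A B) {T : Matrix n n ℂ}
    (C : Matrix n n ℂ) (hT : Tᴴ * T = Aᴴ * C * A) : T * (B * A) = T := by
  have := h.conjTranspose.mul_mul_eq_of_mul_conjTranspose_eq (T := Tᴴ) C
    (by rw [conjTranspose_conjTranspose, conjTranspose_conjTranspose, hT])
  rwa [← conjTranspose_inj, conjTranspose_mul, conjTranspose_mul]

end IsMoorePenroseInverse

theorem isMoorePenroseInverse_conjTranspose {X K : Matrix n n ℂ}
    (hK : IsMoorePenroseInverse (Xᴴ * X) K) : IsMoorePenroseInverse Xᴴ (X * K) := by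
  have hG : (Xᴴ * X)ᴴ = Xᴴ * X := by rw [conjTranspose_mul, conjTranspose_conjTranspose]
  have hKH : Kᴴ = K := (hG ▸ hK.conjTranspose).unique hK
  have hXK : Xᴴ * X * K * Xᴴ = Xᴴ := hK.mul_mul_eq_of_mul_conjTranspose_eq K
    (by rw [conjTranspose_conjTranspose, hG, hK.1])
  obtain ⟨-, h₂, h₃, -⟩ := hK
  refine ⟨?_, ?_, ?_, ?_⟩
  · rw [← mul_assoc, hXK]
  · rw [show X * K * Xᴴ * (X * K) = X * (K * (Xᴴ * X) * K) by simp only [mul_assoc], h₂]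
  · rwa [← mul_assoc]
  · rw [conjTranspose_mul, conjTranspose_mul, conjTranspose_conjTranspose, hKH, mul_assoc]

end MoorePenrose

section FunctionalCalculus

variable {n : Type*} [Fintype n] [DecidableEq n]

theorem Matrix.cfc_mul_cfc (A : Matrix n n ℂ) (f g : ℝ → ℝ) :
    cfc f A * cfc g A = cfc (fun x => f x * g x) A :=
  (cfc_mul f g A (A.finite_real_spectrum.continuousOn f)
    (A.finite_real_spectrum.continuousOn g)).symm

-- On each eigenvalue `x ↦ x⁻¹` is the scalar pseudoinverse, thanks to `(0 : ℝ)⁻¹ = 0`.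
theorem isMoorePenroseInverse_cfc (f : ℝ → ℝ) (A : Matrix n n ℂ) :
    IsMoorePenroseInverse (cfc f A) (cfc (fun x => (f x)⁻¹) A) := by
  have hH : ∀ g : ℝ → ℝ, (cfc g A)ᴴ = cfc g A := fun g => (cfc_predicate g A).star_eq
  have hmul : ∀ x : ℝ, f x * (f x)⁻¹ * f x = f x := fun x => by
    by_cases hx : f x = 0 <;> simp [hx]
  have hmul' : ∀ x : ℝ, (f x)⁻¹ * f x * (f x)⁻¹ = (f x)⁻¹ := fun x => by
    by_cases hx : f x = 0 <;> simp [hx]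
  simp only [IsMoorePenroseInverse, A.cfc_mul_cfc, hH, hmul, hmul', and_self]

theorem pinv_cfc (f : ℝ → ℝ) (A : Matrix n n ℂ) :
    pinv (cfc f A) = cfc (fun x => (f x)⁻¹) A :=
  (isMoorePenroseInverse_cfc f A).pinv_eq

variable {A : Matrix n n ℂ}

theorem pinv_eq_cfc_inv (hA : IsSelfAdjoint A) : pinv A = cfc (·⁻¹ : ℝ → ℝ) A := by
  simpa only [cfc_id' ℝ A] using pinv_cfc (fun x => x) A

theorem isMoorePenroseInverse_pinv (hA : IsSelfAdjoint A) : IsMoorePenroseInverse A (pinv A) := by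
  rw [pinv_eq_cfc_inv hA]
  simpa only [cfc_id' ℝ A] using isMoorePenroseInverse_cfc (fun x => x) A

theorem pinv_conjTranspose (X : Matrix n n ℂ) : pinv Xᴴ = X * pinv (Xᴴ * X) :=
  (isMoorePenroseInverse_conjTranspose
    (isMoorePenroseInverse_pinv (posSemidef_conjTranspose_mul_self X).isHermitian)).pinv_eq

theorem pinv_pinv (hA : IsSelfAdjoint A) : pinv (pinv A) = A :=
  (isMoorePenroseInverse_pinv hA).symm.pinv_eq

theorem posSemidef_pinv (hA : A.PosSemidef) : (pinv A).PosSemidef := by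
  rw [pinv_eq_cfc_inv hA.isHermitian]
  exact (cfc_nonneg fun x hx => inv_nonneg.2 (spectrum_nonneg_of_nonneg hA.nonneg hx)).posSemidef

theorem pinv_mul_self (hA : IsSelfAdjoint A) : pinv (A * A) = pinv A * pinv A := by
  conv_lhs => rw [← cfc_id' ℝ A, A.cfc_mul_cfc, pinv_cfc]
  rw [pinv_eq_cfc_inv hA, A.cfc_mul_cfc]
  simp only [mul_inv]

theorem pinv_mul_pinv_mul_self (hA : IsSelfAdjoint A) : pinv A * pinv A * A = pinv A := by
  have : cfc (fun x : ℝ => x⁻¹ * x⁻¹ * x) A = cfc (·⁻¹) A :=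
    cfc_congr fun x _ => by by_cases hx : x = 0 <;> field_simp [hx]
  rwa [← A.cfc_mul_cfc, ← A.cfc_mul_cfc, cfc_id' ℝ A, ← pinv_eq_cfc_inv hA] at this

end FunctionalCalculus

section SquareRoot

variable {n : Type*} [Fintype n] [DecidableEq n] {A B ρ : Matrix n n ℂ}

theorem msqrt_eq_cfcSqrt (hA : A.PosSemidef) : msqrt A = CFC.sqrt A := by
  rw [CFC.sqrt_eq_cfc, cfc_nnreal_eq_real _ A, hA.1.cfc_eq, msqrt, dif_pos hA]
  have hmax := fun i => max_eq_left (hA.eigenvalues_nonneg i)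
  simp [IsHermitian.cfc, Function.comp_def, hmax]

theorem posSemidef_msqrt (hA : A.PosSemidef) : (msqrt A).PosSemidef := by
  rw [msqrt_eq_cfcSqrt hA]
  exact (CFC.sqrt_nonneg A).posSemidef

theorem msqrt_mul_msqrt_self (hA : A.PosSemidef) : msqrt A * msqrt A = A := by
  rw [msqrt_eq_cfcSqrt hA]
  exact CFC.sqrt_mul_sqrt_self A hA.nonneg

theorem msqrt_eq_of_mul_self_eq (hB : B.PosSemidef) (h : B * B = A) : msqrt A = B := by
  have hA : A.PosSemidef := by
    simpa only [hB.isHermitian.eq, h] using posSemidef_conjTranspose_mul_self B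
  rw [msqrt_eq_cfcSqrt hA]
  exact (CFC.sqrt_eq_iff A B hA.nonneg hB.nonneg).mpr h

theorem msqrt_pinv (hA : A.PosSemidef) : msqrt (pinv A) = pinv (msqrt A) := by
  have hsqrt := posSemidef_msqrt hA
  refine msqrt_eq_of_mul_self_eq (posSemidef_pinv hsqrt) ?_
  rw [← pinv_mul_self hsqrt.isHermitian, msqrt_mul_msqrt_self hA]

theorem geo_pinv (hρ : ρ.PosSemidef) (σ : Matrix n n ℂ) :
    geo (pinv ρ) σ = pinv (msqrt ρ) * msqrt (msqrt ρ * σ * msqrt ρ) * pinv (msqrt ρ) := by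
  rw [geo, msqrt_pinv hρ, pinv_pinv (posSemidef_msqrt hρ).isHermitian]

end SquareRoot

theorem mul_pinv_mul_pinv_mul_eq_of_mul_self_eq {n : Type*} [Fintype n] [DecidableEq n]
    {A S : Matrix n n ℂ} (hA : A.IsHermitian) (hS : S.IsHermitian) (C : Matrix n n ℂ)
    (hSS : S * S = A * C * A) : A * (pinv A * S * pinv A) * A = S := by
  have hApinv := isMoorePenroseInverse_pinv hA
  have hleft : A * pinv A * S = S :=
    hApinv.mul_mul_eq_of_mul_conjTranspose_eq C (by rw [hS.eq, hSS, hA.eq])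
  have hright : S * (pinv A * A) = S :=
    hApinv.mul_mul_eq_of_conjTranspose_mul_eq C (by rw [hS.eq, hSS, hA.eq])
  rw [show A * (pinv A * S * pinv A) * A = A * pinv A * S * (pinv A * A) by
    simp only [mul_assoc], hleft, hright]

theorem sgn_eq_geo_mean_formula {n : Type*} [Fintype n] [DecidableEq n]
    (ρ σ : Matrix n n ℂ) (hρ : ρ.PosSemidef) (hσ : σ.PosSemidef) :
    msgn (msqrt σ * msqrt ρ)
      = pinv (msqrt ρ * msqrt σ) * msqrt ρ * geo (pinv ρ) σ * msqrt ρ := by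
  set A := msqrt ρ
  set B := msqrt σ
  have hA : A.IsHermitian := (posSemidef_msqrt hρ).isHermitian
  have hBB : B * B = σ := msqrt_mul_msqrt_self hσ
  have hAB : (B * A)ᴴ = A * B := by
    rw [conjTranspose_mul, hA.eq, (posSemidef_msqrt hσ).isHermitian.eq]
  have hX : (B * A)ᴴ * (B * A) = A * σ * A := by
    rw [hAB, ← hBB]
    simp only [mul_assoc]
  have hAσA : (A * σ * A).PosSemidef := hX ▸ posSemidef_conjTranspose_mul_self _
  set S := msqrt (A * σ * A)
  have hS : S.IsHermitian := (posSemidef_msqrt hAσA).isHermitian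
  have hSS : S * S = A * σ * A := msqrt_mul_msqrt_self hAσA
  have hgeo : geo (pinv ρ) σ = pinv A * S * pinv A := geo_pinv hρ σ
  have hpinv : pinv (A * B) = B * A * (pinv S * pinv S) := by
    rw [← pinv_mul_self hS, hSS, ← hX, ← hAB, pinv_conjTranspose]
  calc msgn (B * A) = B * A * (pinv S * pinv S * S) := by
        rw [pinv_mul_pinv_mul_self hS, msgn, hX]
  _ = B * A * (pinv S * pinv S) * (A * (pinv A * S * pinv A) * A) := by
        rw [mul_pinv_mul_pinv_mul_eq_of_mul_self_eq hA hS σ hSS]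
        simp only [mul_assoc]
  _ = pinv (A * B) * A * geo (pinv ρ) σ * A := by
        rw [hgeo, hpinv]
        simp only [mul_assoc]
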